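/- Let T be a tree and e ∈ T an edge. Then the pre-broad poset T^{≤e} with underlying set {f ∈ T : f ≤_d e} and generating relations f^↑ ≤ f for f ≤_d e is a tree. Similarly, for a ≤_d-incomparable tuple e̲ = e_1⋯e_n, the pre-broad poset T_{≮e̲} with underlying set {f ∈ T : ∀i, f ≮_d e_i} and generating relations f^↑ ≤ f for f with f ≮_d e_i and f ≠ e_i for all i, is a tree. Moreover T is isomorphic to the iterated grafting T_{≮e̲} ⨿_{e̲} (T^{≤e_1} ⨿ ⋯ ⨿ T^{≤e_n}). -/

import Mathlib

/-!
Every relation `f̲ ≤ f` of a tree is an identity or factors through the vertex `f^↑ ≤ f`, and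
`≤_d` is well founded, so relations are generated by vertices and can be analysed by induction on
the head. Below `e` every vertex is a generator of `T^{≤e}`, so `T^{≤e}` is the restriction of `T`.
Above `e̲`, a vertex `f^↑ ≤ f` with `f` not below any `eᵢ` has no letter strictly below an `eᵢ`,
because the ancestors of an element form a chain; hence unfolding a relation vertex by vertex
stays in `T_{≮e̲}` until it reaches some `eᵢ`, where the rest is a relation of `T^{≤eᵢ}`. The
tree axioms of both pieces are inherited from `T` through the inclusion of underlying sets.
-/

universe u

namespace BroadPaper

/-- A broad relation on `X`: a relation between finite unordered tuples
(multisets) over `X` and elements of `X`. -/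
abbrev Rel (X : Type u) : Type u := Multiset X → X → Prop

variable {X : Type u} {Y : Type u} {A : Type u} {B : Type u} {Z : Type u}

/-- Broad transitivity: if `f₁ ⋯ fₙ ≤ e` and `g̲ᵢ ≤ fᵢ` then `g̲₁ ⋯ g̲ₙ ≤ e`,
encoded via a multiset of pairs `(g̲ᵢ, fᵢ)`. -/
def BTrans (r : Rel X) : Prop :=
  ∀ (p : Multiset (Multiset X × X)) (e : X),
    r (p.map Prod.snd) e → (∀ q ∈ p, r q.1 q.2) → r ((p.map Prod.fst).sum) e

/-- A pre-broad poset: reflexivity plus broad transitivity. -/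
def IsPreBroad (r : Rel X) : Prop := (∀ e : X, r {e} e) ∧ BTrans r

/-- A (commutative) broad poset: a pre-broad poset satisfying antisymmetry. -/
def IsBroad (r : Rel X) : Prop :=
  IsPreBroad r ∧ ∀ e f : X, r {e} f → r {f} e → e = f

/-- Simplicity: letters in any broad relation are pairwise distinct. -/
def Simple (r : Rel X) : Prop := ∀ fs e, r fs e → fs.Nodup

/-- The descendant relation `f ≤_d e`. -/
def descends (r : Rel X) (f e : X) : Prop := ∃ fs, r fs e ∧ f ∈ fs

def Comparable (r : Rel X) (f g : X) : Prop := descends r f g ∨ descends r g f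

def Incomp (r : Rel X) (f g : X) : Prop := ¬ descends r f g ∧ ¬ descends r g f

/-- Blockwise extension of a broad relation to a relation between tuples:
`fs ≤ es` iff `fs = f̲₁ ⋯ f̲ₖ`, `es = e₁ ⋯ eₖ` with `f̲ᵢ ≤ eᵢ`. -/
def tupleLE (r : Rel X) (fs es : Multiset X) : Prop :=
  ∃ p : Multiset (Multiset X × X),
    p.map Prod.snd = es ∧ (p.map Prod.fst).sum = fs ∧ ∀ q ∈ p, r q.1 q.2

/-- A leaf: no tuple strictly below `e`. -/
def IsLeaf (r : Rel X) (e : X) : Prop := ¬ ∃ fs, r fs e ∧ fs ≠ ({e} : Multiset X)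

/-- `fs` is the maximum tuple strictly below `e` (written `e^↑`).
If `fs ≠ 0`, `e` is a node; if `fs = 0`, `e` is a stump. -/
def upTuple (r : Rel X) (e : X) (fs : Multiset X) : Prop :=
  (r fs e ∧ fs ≠ ({e} : Multiset X)) ∧
    ∀ gs, r gs e → gs ≠ ({e} : Multiset X) → tupleLE r gs fs

def IsStump (r : Rel X) (e : X) : Prop := upTuple r e 0

/-- A dendroidally ordered set (tree): a finite simple broad poset in which
every element is a leaf, node or stump, with a `≤_d`-maximum (root). -/
def IsTree (r : Rel X) : Prop :=
  IsBroad r ∧ Finite X ∧ Simple r ∧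
    (∀ e : X, IsLeaf r e ∨ ∃ fs, upTuple r e fs) ∧
    ∃ rt : X, ∀ e, descends r e rt

def IsMaxEl (r : Rel X) (e : X) : Prop := ∀ s, descends r e s → s = e

/-- A forestially ordered set (forest): each element has a unique
`≤_d`-maximal element above it. -/
def IsForest (r : Rel X) : Prop :=
  IsBroad r ∧ Finite X ∧ Simple r ∧
    (∀ e : X, IsLeaf r e ∨ ∃ fs, upTuple r e fs) ∧
    ∀ e : X, ∃! rt : X, IsMaxEl r rt ∧ descends r e rt

/-- A map of broad posets: preserves broad relations (letterwise on tuples). -/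
def BroadHom (r : Rel X) (r' : Rel Y) (φ : X → Y) : Prop :=
  ∀ fs e, r fs e → r' (fs.map φ) (φ e)

/-- `rs` is the root tuple: the tuple of `≤_d`-maximal elements (no repeats). -/
def IsRootTuple (r : Rel X) (rs : Multiset X) : Prop :=
  rs.Nodup ∧ ∀ x, x ∈ rs ↔ IsMaxEl r x

/-- Independent map of forests: `φ(r̲_F)·e̲ ≤ r̲_{F'}` for some tuple `e̲`. -/
def Independent (r : Rel X) (r' : Rel Y) (φ : X → Y) : Prop :=
  ∃ (rs : Multiset X) (rs' : Multiset Y) (es : Multiset Y),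
    IsRootTuple r rs ∧ IsRootTuple r' rs' ∧ tupleLE r' (rs.map φ + es) rs'

/-- The (pre-)broad relation generated by a set of generating relations:
closure under reflexivity and broad transitivity. -/
inductive GenRel (gen : Rel X) : Rel X
  | of : ∀ fs e, gen fs e → GenRel gen fs e
  | refl : ∀ e, GenRel gen {e} e
  | btrans : ∀ (p : Multiset (Multiset X × X)) (e : X),
      GenRel gen (p.map Prod.snd) e → (∀ q ∈ p, GenRel gen q.1 q.2) →
      GenRel gen ((p.map Prod.fst).sum) e

/-- Generators of the tensor product `S ⊗ T`: relations `s̲ × t ≤ (s,t)` and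
`s × t̲ ≤ (s,t)`. -/
def tensorGen (rS : Rel A) (rT : Rel B) : Rel (A × B) := fun xs x =>
  (∃ as, rS as x.1 ∧ xs = as.map fun a => (a, x.2)) ∨
  (∃ bs, rT bs x.2 ∧ xs = bs.map fun b => (x.1, b))

/-- The tensor product broad relation on `A × B`. -/
def tensorRel (rS : Rel A) (rT : Rel B) : Rel (A × B) := GenRel (tensorGen rS rT)

/-- Product of tuples: all pairs from `as` and `bs`. -/
def mprod (as : Multiset A) (bs : Multiset B) : Multiset (A × B) :=
  as.bind fun a => bs.map fun b => (a, b)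

end BroadPaper

namespace BroadPaper

/-- Generators of `T^{≤e}`: vertices `f^↑ ≤ f` for `f ≤_d e`. -/
def belowGen {X : Type u} (r : Rel X) (e : X) : Rel X := fun fs f =>
  upTuple r f fs ∧ descends r f e

/-- The broad relation of `T^{≤e}` (generated by the vertices below `e`). -/
def rBelow {X : Type u} (r : Rel X) (e : X) : Rel X := GenRel (belowGen r e)

/-- Strict descendant relation `f <_d g`. -/
def sdescends {X : Type u} (r : Rel X) (f g : X) : Prop :=
  descends r f g ∧ f ≠ g

/-- Generators of `T_{≮e̲}`: vertices `f^↑ ≤ f` with `f ≮_d eᵢ` and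
`f ≠ eᵢ` for all `i`. -/
def aboveGen {X : Type u} (r : Rel X) (es : Multiset X) : Rel X := fun fs f =>
  upTuple r f fs ∧ ∀ g ∈ es, ¬ sdescends r f g ∧ f ≠ g

/-- The broad relation of `T_{≮e̲}`. -/
def rAbove {X : Type u} (r : Rel X) (es : Multiset X) : Rel X :=
  GenRel (aboveGen r es)

section PreBroad

variable {X : Type u} {R R' : Rel X}

@[simp] lemma tupleLE_zero_right_iff {fs : Multiset X} : tupleLE R fs 0 ↔ fs = 0 := by
  constructor
  · rintro ⟨p, hp, rfl, -⟩
    simp [Multiset.map_eq_zero.mp hp]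
  · rintro rfl
    exact ⟨0, by simp⟩

lemma tupleLE_cons_right_iff {fs ms : Multiset X} {g : X} :
    tupleLE R fs (g ::ₘ ms) ↔ ∃ fs₁ fs₂, R fs₁ g ∧ tupleLE R fs₂ ms ∧ fs = fs₁ + fs₂ := by
  classical
  constructor
  · rintro ⟨p, hp, rfl, hR⟩
    obtain ⟨q, hq, rfl, hrest⟩ := (Multiset.map_eq_cons _ _ _ _).mpr hp
    refine ⟨q.1, _, hR q hq,
      ⟨p.erase q, hrest, rfl, fun q' hq' => hR q' (Multiset.mem_of_mem_erase hq')⟩, ?_⟩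
    conv_lhs => rw [← Multiset.cons_erase hq]
    simp
  · rintro ⟨fs₁, fs₂, h₁, ⟨p, rfl, rfl, hR⟩, rfl⟩
    refine ⟨(fs₁, g) ::ₘ p, by simp, by simp, fun q hq => ?_⟩
    rcases Multiset.mem_cons.mp hq with rfl | hq
    exacts [h₁, hR q hq]

lemma tupleLE_singleton_right_iff {fs : Multiset X} {g : X} :
    tupleLE R fs {g} ↔ R fs g := by
  rw [← Multiset.cons_zero, tupleLE_cons_right_iff]
  simp

lemma tupleLE_add_right_iff {fs ms₁ ms₂ : Multiset X} :
    tupleLE R fs (ms₁ + ms₂) ↔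
      ∃ fs₁ fs₂, tupleLE R fs₁ ms₁ ∧ tupleLE R fs₂ ms₂ ∧ fs = fs₁ + fs₂ := by
  induction ms₁ using Multiset.induction generalizing fs with
  | empty => simp
  | cons g ms₁ ih =>
    simp only [Multiset.cons_add, tupleLE_cons_right_iff]
    constructor
    · rintro ⟨a, b, ha, hb, rfl⟩
      obtain ⟨b₁, b₂, hb₁, hb₂, rfl⟩ := ih.mp hb
      exact ⟨a + b₁, b₂, ⟨a, b₁, ha, hb₁, rfl⟩, hb₂, (add_assoc _ _ _).symm⟩
    · rintro ⟨_, fs₂, ⟨a, b, ha, hb, rfl⟩, h₂, rfl⟩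
      exact ⟨a, b + fs₂, ha, ih.mpr ⟨b, fs₂, hb, h₂, rfl⟩, add_assoc _ _ _⟩

lemma tupleLE_add {fs₁ fs₂ ms₁ ms₂ : Multiset X} (h₁ : tupleLE R fs₁ ms₁)
    (h₂ : tupleLE R fs₂ ms₂) : tupleLE R (fs₁ + fs₂) (ms₁ + ms₂) :=
  tupleLE_add_right_iff.mpr ⟨fs₁, fs₂, h₁, h₂, rfl⟩

lemma tupleLE_refl (hR : ∀ x, R {x} x) (ms : Multiset X) : tupleLE R ms ms := by
  induction ms using Multiset.induction with
  | empty => simp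
  | cons g ms ih => exact tupleLE_cons_right_iff.mpr ⟨{g}, ms, hR g, ih, rfl⟩

lemma tupleLE.mono {fs ms : Multiset X} (h : ∀ g ∈ ms, ∀ gs, R gs g → R' gs g) :
    tupleLE R fs ms → tupleLE R' fs ms := by
  rintro ⟨p, rfl, rfl, hp⟩
  exact ⟨p, rfl, rfl, fun q hq => h _ (Multiset.mem_map_of_mem _ hq) _ (hp q hq)⟩

lemma tupleLE.exists_descends_of_mem {fs ms : Multiset X} {x : X} (h : tupleLE R fs ms)
    (hx : x ∈ fs) : ∃ g ∈ ms, descends R x g := by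
  obtain ⟨p, rfl, rfl, hp⟩ := h
  obtain ⟨_, hs, hxs⟩ := Multiset.mem_join.mp hx
  obtain ⟨q, hq, rfl⟩ := Multiset.mem_map.mp hs
  exact ⟨q.2, Multiset.mem_map_of_mem _ hq, q.1, hp q hq, hxs⟩

lemma upTuple.exists_mem_descends {e x : X} {gs : Multiset X} (hup : upTuple R e gs)
    (h : sdescends R x e) : ∃ g ∈ gs, descends R x g := by
  obtain ⟨⟨fs, hfs, hx⟩, hne⟩ := h
  exact (hup.2 fs hfs fun h => hne (Multiset.mem_singleton.mp (h ▸ hx))).exists_descends_of_mem hx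

lemma btrans_iff : BTrans R ↔ ∀ fs ms e, R ms e → tupleLE R fs ms → R fs e := by
  constructor
  · rintro h fs ms e hms ⟨p, rfl, rfl, hp⟩
    exact h p e hms hp
  · intro h p e hp hq
    exact h _ _ e hp ⟨p, rfl, rfl, hq⟩

lemma BTrans.rel_of_tupleLE (hR : BTrans R) {fs ms : Multiset X} {e : X} (h : R ms e)
    (h' : tupleLE R fs ms) : R fs e :=
  btrans_iff.mp hR fs ms e h h'

lemma tupleLE_trans (hR : BTrans R) {fs ms gs : Multiset X} (h₁ : tupleLE R fs ms)
    (h₂ : tupleLE R ms gs) : tupleLE R fs gs := by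
  induction gs using Multiset.induction generalizing fs ms with
  | empty =>
    rw [tupleLE_zero_right_iff] at h₂
    subst h₂
    exact h₁
  | cons g gs ih =>
    obtain ⟨m₁, m₂, hm₁, hm₂, rfl⟩ := tupleLE_cons_right_iff.mp h₂
    obtain ⟨f₁, f₂, hf₁, hf₂, rfl⟩ := tupleLE_add_right_iff.mp h₁
    exact tupleLE_cons_right_iff.mpr ⟨f₁, f₂, hR.rel_of_tupleLE hm₁ hf₁, ih hf₂ hm₂, rfl⟩

lemma IsPreBroad.subst (hR : IsPreBroad R) [DecidableEq X] {fs gs : Multiset X} {g e : X}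
    (hgs : R gs e) (hg : g ∈ gs) (hfs : R fs g) : R (gs.erase g + fs) e := by
  refine hR.2.rel_of_tupleLE hgs ?_
  conv_rhs => rw [← Multiset.cons_erase hg, ← Multiset.singleton_add, add_comm]
  exact tupleLE_add (tupleLE_refl hR.1 _) (tupleLE_singleton_right_iff.mpr hfs)

lemma IsPreBroad.descends_trans (hR : IsPreBroad R) {x y z : X} (h₁ : descends R x y)
    (h₂ : descends R y z) : descends R x z := by
  classical
  obtain ⟨fs, hfs, hx⟩ := h₁
  obtain ⟨gs, hgs, hy⟩ := h₂
  exact ⟨_, hR.subst hgs hy hfs, Multiset.mem_add.mpr (Or.inr hx)⟩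

lemma IsLeaf.mono {e : X} (h : ∀ fs, R fs e → R' fs e) (hleaf : IsLeaf R' e) : IsLeaf R e :=
  fun ⟨fs, hfs, hne⟩ => hleaf ⟨fs, h fs hfs, hne⟩

end PreBroad

section GenRel

variable {X : Type u} {gen R : Rel X}

lemma GenRel.isPreBroad (gen : Rel X) : IsPreBroad (GenRel gen) :=
  ⟨GenRel.refl, GenRel.btrans⟩

lemma GenRel.le_of_isPreBroad (hR : IsPreBroad R) (hgen : ∀ fs e, gen fs e → R fs e)
    {fs : Multiset X} {e : X} (h : GenRel gen fs e) : R fs e := by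
  induction h with
  | of fs e h => exact hgen fs e h
  | refl e => exact hR.1 e
  | btrans p e _ _ ih₁ ih₂ => exact hR.2 p e ih₁ ih₂

lemma GenRel.eq_singleton_or_exists_tupleLE {fs : Multiset X} {e : X} (h : GenRel gen fs e) :
    fs = {e} ∨ ∃ gs, gen gs e ∧ tupleLE (GenRel gen) fs gs := by
  induction h with
  | of fs e h => exact Or.inr ⟨fs, h, tupleLE_refl GenRel.refl fs⟩
  | refl e => exact Or.inl rfl
  | btrans p e _ hblk ih₁ ih₂ =>
    have hp : tupleLE (GenRel gen) (p.map Prod.fst).sum (p.map Prod.snd) := ⟨p, rfl, rfl, hblk⟩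
    rcases ih₁ with htop | ⟨gs, hgen, hle⟩
    · obtain ⟨q, rfl, hq⟩ := Multiset.map_eq_singleton.mp htop
      simpa [hq] using ih₂ q (Multiset.mem_singleton_self q)
    · exact Or.inr ⟨gs, hgen, tupleLE_trans (GenRel.isPreBroad gen).2 hp hle⟩

end GenRel

section Tree

variable {X : Type u} {r : Rel X}

lemma IsTree.isPreBroad (ht : IsTree r) : IsPreBroad r := ht.1.1

lemma IsTree.nodup (ht : IsTree r) {fs : Multiset X} {e : X} (h : r fs e) : fs.Nodup :=
  ht.2.2.1 fs e h

lemma IsTree.isLeaf_or_exists_upTuple (ht : IsTree r) (e : X) :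
    IsLeaf r e ∨ ∃ fs, upTuple r e fs :=
  ht.2.2.2.1 e

lemma IsTree.exists_root (ht : IsTree r) : ∃ rt, ∀ e, descends r e rt := ht.2.2.2.2

lemma IsTree.descends_refl (ht : IsTree r) (e : X) : descends r e e :=
  ⟨{e}, ht.isPreBroad.1 e, Multiset.mem_singleton_self e⟩

lemma IsTree.eq_singleton_of_mem (ht : IsTree r) {fs : Multiset X} {e : X} (hfs : r fs e)
    (he : e ∈ fs) : fs = {e} := by
  classical
  have hdisj := (Multiset.nodup_add.mp (ht.nodup (ht.isPreBroad.subst hfs he hfs))).2.2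
  have hrest : fs.erase e = 0 := Multiset.eq_zero_of_forall_notMem fun x hx =>
    Multiset.disjoint_left.mp hdisj hx (Multiset.mem_of_mem_erase hx)
  rw [← Multiset.cons_erase he, hrest]
  rfl

lemma IsTree.descends_antisymm (ht : IsTree r) {x y : X} (h₁ : descends r x y)
    (h₂ : descends r y x) : x = y := by
  classical
  obtain ⟨fs, hfs, hx⟩ := h₁
  obtain ⟨gs, hgs, hy⟩ := h₂
  have h := ht.eq_singleton_of_mem (ht.isPreBroad.subst hgs hy hfs)
    (Multiset.mem_add.mpr (Or.inr hx))
  have hfs₁ : fs = {x} := by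
    have hle : fs ≤ {x} := h ▸ Multiset.le_add_left _ _
    exact (Multiset.le_singleton.mp hle).resolve_left fun h0 => by simp [h0] at hx
  have hgs₁ : gs = {y} := by
    rw [hfs₁, add_eq_right] at h
    rw [← Multiset.cons_erase hy, h]
    rfl
  subst hfs₁ hgs₁
  exact ht.1.2 x y hfs hgs

lemma IsTree.sdescends_trans (ht : IsTree r) {x y z : X} (h₁ : sdescends r x y)
    (h₂ : sdescends r y z) : sdescends r x z := by
  refine ⟨ht.isPreBroad.descends_trans h₁.1 h₂.1, ?_⟩
  rintro rfl
  exact h₁.2 (ht.descends_antisymm h₁.1 h₂.1)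

lemma IsTree.wellFounded_sdescends (ht : IsTree r) : WellFounded (sdescends r) := by
  have := ht.2.1
  have : IsTrans X (sdescends r) := ⟨fun _ _ _ => ht.sdescends_trans⟩
  have : Std.Irrefl (sdescends r) := ⟨fun _ h => h.2 rfl⟩
  exact Finite.wellFounded_of_trans_of_irrefl _

lemma IsTree.sdescends_of_mem (ht : IsTree r) {fs : Multiset X} {f x : X} (hfs : r fs f)
    (hne : fs ≠ {f}) (hx : x ∈ fs) : sdescends r x f := by
  refine ⟨⟨fs, hfs, hx⟩, ?_⟩
  rintro rfl
  exact hne (ht.eq_singleton_of_mem hfs hx)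

lemma IsTree.exists_upTuple (ht : IsTree r) {fs : Multiset X} {f : X} (hfs : r fs f)
    (hne : fs ≠ {f}) : ∃ gs, upTuple r f gs :=
  (ht.isLeaf_or_exists_upTuple f).resolve_left fun hleaf => hleaf ⟨fs, hfs, hne⟩

lemma IsTree.exists_upTuple_of_sdescends (ht : IsTree r) {x f : X} (h : sdescends r x f) :
    ∃ gs, upTuple r f gs := by
  obtain ⟨⟨fs, hfs, hx⟩, hne⟩ := h
  exact ht.exists_upTuple hfs fun h => hne (Multiset.mem_singleton.mp (h ▸ hx))

/-- Substituting relations into both letters would repeat a common descendant, contradicting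
simplicity. -/
lemma IsTree.not_descends_of_mem_of_mem (ht : IsTree r) {cs : Multiset X} {c g₁ g₂ a : X}
    (hcs : r cs c) (h₁ : g₁ ∈ cs) (h₂ : g₂ ∈ cs) (hne : g₁ ≠ g₂) (ha₁ : descends r a g₁) :
    ¬ descends r a g₂ := by
  rintro ⟨t₂, ht₂, ha₂⟩
  obtain ⟨t₁, ht₁, ha₁⟩ := ha₁
  obtain ⟨cs, rfl⟩ := Multiset.exists_cons_of_mem h₁
  obtain ⟨rest, rfl⟩ := Multiset.exists_cons_of_mem
    ((Multiset.mem_cons.mp h₂).resolve_left hne.symm)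
  have hle : tupleLE r (t₁ + (t₂ + rest)) (g₁ ::ₘ g₂ ::ₘ rest) :=
    tupleLE_cons_right_iff.mpr ⟨t₁, _, ht₁,
      tupleLE_cons_right_iff.mpr ⟨t₂, rest, ht₂, tupleLE_refl ht.isPreBroad.1 rest, rfl⟩, rfl⟩
  have hnd := ht.nodup (ht.isPreBroad.2.rel_of_tupleLE hcs hle)
  exact Multiset.disjoint_left.mp (Multiset.nodup_add.mp hnd).2.2 ha₁
    (Multiset.mem_add.mpr (Or.inl ha₂))

lemma IsTree.descends_total (ht : IsTree r) {g a b : X} (hga : descends r g a)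
    (hgb : descends r g b) : descends r a b ∨ descends r b a := by
  obtain ⟨rt, hrt⟩ := ht.exists_root
  suffices ∀ c, descends r a c → descends r b c → descends r a b ∨ descends r b a from
    this rt (hrt a) (hrt b)
  intro c
  induction c using ht.wellFounded_sdescends.induction with
  | _ c ih =>
    intro hac hbc
    by_cases hac' : a = c
    · exact Or.inr (hac' ▸ hbc)
    by_cases hbc' : b = c
    · exact Or.inl (hbc' ▸ hac)
    obtain ⟨cs, hup⟩ := ht.exists_upTuple_of_sdescends ⟨hac, hac'⟩
    obtain ⟨a₀, ha₀, haa₀⟩ := hup.exists_mem_descends ⟨hac, hac'⟩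
    obtain ⟨b₀, hb₀, hbb₀⟩ := hup.exists_mem_descends ⟨hbc, hbc'⟩
    obtain rfl : a₀ = b₀ := by
      by_contra hne
      exact ht.not_descends_of_mem_of_mem hup.1.1 ha₀ hb₀ hne
        (ht.isPreBroad.descends_trans hga haa₀) (ht.isPreBroad.descends_trans hgb hbb₀)
    exact ih a₀ (ht.sdescends_of_mem hup.1.1 hup.1.2 ha₀) haa₀ hbb₀

lemma IsTree.upTuple_unique (ht : IsTree r) {f : X} {gs gs' : Multiset X}
    (hu : upTuple r f gs) (hu' : upTuple r f gs') : gs = gs' := by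
  have key : ∀ {as bs}, upTuple r f as → upTuple r f bs → ∀ h ∈ as, h ∈ bs := by
    intro as bs ha hb h hh
    obtain ⟨x, hx, hhx⟩ := (hb.2 as ha.1.1 ha.1.2).exists_descends_of_mem hh
    obtain ⟨h', hh', hxh'⟩ := (ha.2 bs hb.1.1 hb.1.2).exists_descends_of_mem hx
    obtain rfl : h = h' := by
      by_contra hne
      exact ht.not_descends_of_mem_of_mem ha.1.1 hh hh' hne (ht.descends_refl h)
        (ht.isPreBroad.descends_trans hhx hxh')
    rwa [ht.descends_antisymm hhx hxh']
  exact (Multiset.Nodup.ext (ht.nodup hu.1.1) (ht.nodup hu'.1.1)).mpr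
    fun a => ⟨key hu hu' a, key hu' hu a⟩

theorem IsTree.rel_induction (ht : IsTree r) {P : Multiset X → X → Prop}
    (refl : ∀ f, P {f} f)
    (vertex : ∀ f gs fs, upTuple r f gs →
      tupleLE (fun hs g => r hs g ∧ P hs g) fs gs → P fs f)
    {fs : Multiset X} {f : X} (h : r fs f) : P fs f := by
  induction f using ht.wellFounded_sdescends.induction generalizing fs with
  | _ f ih =>
    by_cases hfs : fs = {f}
    · exact hfs ▸ refl f
    obtain ⟨gs, hup⟩ := ht.exists_upTuple h hfs
    refine vertex f gs fs hup (tupleLE.mono (fun g hg hs hhs => ⟨hhs, ?_⟩) (hup.2 fs h hfs))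
    exact ih g (ht.sdescends_of_mem hup.1.1 hup.1.2 hg) hhs

end Tree

section Restrict

variable {X : Type u} {R : Rel X}

def Rel.restrict (R : Rel X) (P : X → Prop) : Rel {x // P x} :=
  fun fs f => R (fs.map Subtype.val) f.val

lemma tupleLE_restrict_iff {P : X → Prop} {fs ms : Multiset {x // P x}} :
    tupleLE (R.restrict P) fs ms ↔ tupleLE R (fs.map Subtype.val) (ms.map Subtype.val) := by
  induction ms using Multiset.induction generalizing fs with
  | empty => simp
  | cons g ms ih =>
    rw [Multiset.map_cons, tupleLE_cons_right_iff, tupleLE_cons_right_iff]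
    constructor
    · rintro ⟨a, b, ha, hb, rfl⟩
      exact ⟨a.map Subtype.val, b.map Subtype.val, ha, ih.mp hb, Multiset.map_add _ _ _⟩
    · rintro ⟨a, b, ha, hb, hfs⟩
      have hP : ∀ x ∈ a + b, P x := by
        rw [← hfs]
        intro x hx
        obtain ⟨y, -, rfl⟩ := Multiset.mem_map.mp hx
        exact y.2
      lift a to Multiset {x // P x} using fun x hx => hP x (Multiset.mem_add.mpr (Or.inl hx))
      lift b to Multiset {x // P x} using fun x hx => hP x (Multiset.mem_add.mpr (Or.inr hx))
      rw [← Multiset.map_add] at hfs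
      exact ⟨a, b, ha, ih.mpr hb, Multiset.map_injective Subtype.val_injective hfs⟩

theorem IsTree.restrict {r : Rel X} (ht : IsTree r) {P : X → Prop} (hR : IsPreBroad R)
    (hRr : ∀ fs f, R fs f → r fs f) (hletters : ∀ fs f, R fs f → P f → ∀ x ∈ fs, P x)
    (hvertex : ∀ f, P f → IsLeaf R f ∨ ∃ gs, upTuple R f gs)
    (hroot : ∃ rt, P rt ∧ ∀ f, P f → descends R f rt) :
    IsTree (R.restrict P) := by
  have hinj : Function.Injective (Multiset.map (Subtype.val : {x // P x} → X)) :=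
    Multiset.map_injective Subtype.val_injective
  have hne : ∀ {fs : Multiset {x // P x}} {f}, fs ≠ {f} → fs.map Subtype.val ≠ {f.val} :=
    fun h h' => h (hinj (by simpa using h'))
  refine ⟨⟨⟨fun f => by simpa [Rel.restrict] using hR.1 f.val, ?_⟩, ?_⟩, ?_, ?_, ?_, ?_⟩
  · exact btrans_iff.mpr fun fs ms e hms hle =>
      hR.2.rel_of_tupleLE hms (tupleLE_restrict_iff.mp hle)
  · exact fun a b hab hba => Subtype.ext (ht.1.2 _ _ (by simpa using hRr _ _ hab)
      (by simpa using hRr _ _ hba))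
  · have := ht.2.1
    exact Subtype.finite
  · exact fun fs f h => (ht.nodup (hRr _ _ h)).of_map _
  · intro f
    rcases hvertex f.val f.2 with hleaf | ⟨gs, hup⟩
    · exact Or.inl fun ⟨fs, hfs, hfs'⟩ => hleaf ⟨_, hfs, hne hfs'⟩
    · lift gs to Multiset {x // P x} using hletters _ _ hup.1.1 f.2
      refine Or.inr ⟨gs, ⟨hup.1.1, fun h => hup.1.2 (by rw [h]; rfl)⟩, fun hs hhs hhs' => ?_⟩
      exact tupleLE_restrict_iff.mpr (hup.2 _ hhs (hne hhs'))
  · obtain ⟨rt, hPrt, hrt⟩ := hroot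
    refine ⟨⟨rt, hPrt⟩, fun f => ?_⟩
    obtain ⟨fs, hfs, hf⟩ := hrt f.val f.2
    lift fs to Multiset {x // P x} using hletters _ _ hfs hPrt
    exact ⟨fs, hfs, (Multiset.mem_map_of_injective Subtype.val_injective).mp hf⟩

end Restrict

section Below

variable {X : Type u} {r : Rel X} {e : X}

lemma rBelow_le (ht : IsTree r) {fs : Multiset X} {f : X} (h : rBelow r e fs f) : r fs f :=
  GenRel.le_of_isPreBroad ht.isPreBroad (fun _ _ hgen => hgen.1.1.1) h

lemma rBelow_iff (ht : IsTree r) {fs : Multiset X} {f : X} (hfe : descends r f e) :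
    rBelow r e fs f ↔ r fs f := by
  refine ⟨rBelow_le ht, fun h => ?_⟩
  refine ht.rel_induction (P := fun fs f => descends r f e → rBelow r e fs f)
    (fun f _ => GenRel.refl f) (fun f gs fs hup hle hfe => ?_) h hfe
  refine (GenRel.isPreBroad _).2.rel_of_tupleLE (GenRel.of _ _ ⟨hup, hfe⟩) (hle.mono ?_)
  exact fun g hg hs hhs => hhs.2 (ht.isPreBroad.descends_trans ⟨gs, hup.1.1, hg⟩ hfe)

theorem isTree_restrict_rBelow (ht : IsTree r) (e : X) :
    IsTree ((rBelow r e).restrict (descends r · e)) := by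
  refine ht.restrict (GenRel.isPreBroad _) (fun _ _ => rBelow_le ht)
    (fun fs f h hfe x hx => ht.isPreBroad.descends_trans ⟨fs, rBelow_le ht h, hx⟩ hfe)
    (fun f hfe => ?_) ⟨e, ht.descends_refl e, fun f ⟨fs, hfs, hf⟩ => ?_⟩
  · rcases ht.isLeaf_or_exists_upTuple f with hleaf | ⟨gs, hup⟩
    · exact Or.inl (hleaf.mono fun _ => rBelow_le ht)
    refine Or.inr ⟨gs, ⟨GenRel.of _ _ ⟨hup, hfe⟩, hup.1.2⟩, fun hs hhs hne => ?_⟩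
    refine (hup.2 hs (rBelow_le ht hhs) hne).mono fun g hg ks hks => ?_
    exact (rBelow_iff ht (ht.isPreBroad.descends_trans ⟨gs, hup.1.1, hg⟩ hfe)).mpr hks
  · exact ⟨fs, (rBelow_iff ht (ht.descends_refl e)).mpr hfs, hf⟩

end Below

section Above

variable {X : Type u} {r : Rel X} {es : Multiset X}

lemma rAbove_le (ht : IsTree r) {fs : Multiset X} {f : X} (h : rAbove r es fs f) : r fs f :=
  GenRel.le_of_isPreBroad ht.isPreBroad (fun _ _ hgen => hgen.1.1.1) h

/-- Since `e` and `f` are both ancestors of `g`, they are comparable; if `e <_d f` then `e`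
lies below some letter of `f^↑`, which must be `g` itself. -/
lemma IsTree.not_sdescends_of_mem_upTuple (ht : IsTree r) {f g e : X} {gs : Multiset X}
    (hfe : ¬ descends r f e) (hup : upTuple r f gs) (hg : g ∈ gs) : ¬ sdescends r g e := by
  rintro ⟨hge, hne⟩
  have hgf := ht.sdescends_of_mem hup.1.1 hup.1.2 hg
  rcases ht.descends_total hge hgf.1 with hef | hfe'
  · obtain ⟨g', hg', heg'⟩ :=
      hup.exists_mem_descends ⟨hef, fun h => hfe (h ▸ ht.descends_refl e)⟩
    by_cases hgg' : g = g'
    · exact hne (ht.descends_antisymm hge (hgg' ▸ heg'))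
    · exact ht.not_descends_of_mem_of_mem hup.1.1 hg hg' hgg' (ht.descends_refl g)
        (ht.isPreBroad.descends_trans hge heg')
  · exact hfe hfe'

lemma not_sdescends_of_mem_rAbove (ht : IsTree r) {fs : Multiset X} {f : X}
    (h : rAbove r es fs f) (hf : ∀ g ∈ es, ¬ sdescends r f g) :
    ∀ x ∈ fs, ∀ g ∈ es, ¬ sdescends r x g := by
  induction h with
  | of fs f hgen =>
    intro x hx g hg
    exact ht.not_sdescends_of_mem_upTuple (fun h => (hgen.2 g hg).1 ⟨h, (hgen.2 g hg).2⟩)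
      hgen.1 hx
  | refl f => exact fun x hx => Multiset.mem_singleton.mp hx ▸ hf
  | btrans p f _ _ ih₁ ih₂ =>
    intro x hx
    obtain ⟨_, hs, hxs⟩ := Multiset.mem_join.mp hx
    obtain ⟨q, hq, rfl⟩ := Multiset.mem_map.mp hs
    exact ih₂ q hq (ih₁ hf q.2 (Multiset.mem_map_of_mem _ hq)) x hxs

/-- The relations of the grafting `T_{≮e̲} ⨿_{e̲} (T^{≤e₁} ⨿ ⋯ ⨿ T^{≤eₙ})` that are composites:
the letters `ts` are kept, and each `q.2 ∈ e̲` is replaced by a relation `q.1 ≤ q.2` of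
`T^{≤q.2}`. -/
def graftRel (r : Rel X) (es : Multiset X) (fs : Multiset X) (f : X) : Prop :=
  ∃ (ts : Multiset X) (p : Multiset (Multiset X × X)),
    rAbove r es (ts + p.map Prod.snd) f ∧
    (∀ q ∈ p, q.2 ∈ es ∧ rBelow r q.2 q.1 q.2) ∧
    fs = ts + (p.map Prod.fst).sum

lemma graftRel_iff {fs : Multiset X} {f : X} :
    graftRel r es fs f ↔ ∃ ts bs cs, rAbove r es (ts + bs) f ∧
      tupleLE (fun cs g => g ∈ es ∧ rBelow r g cs g) cs bs ∧ fs = ts + cs := by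
  constructor
  · rintro ⟨ts, p, htop, hp, rfl⟩
    exact ⟨ts, _, _, htop, ⟨p, rfl, rfl, hp⟩, rfl⟩
  · rintro ⟨ts, _, _, htop, ⟨p, rfl, rfl, hp⟩, rfl⟩
    exact ⟨ts, p, htop, hp, rfl⟩

lemma rel_of_graftRel (ht : IsTree r) {fs : Multiset X} {f : X} (h : graftRel r es fs f) :
    r fs f := by
  obtain ⟨ts, bs, cs, htop, hblk, rfl⟩ := graftRel_iff.mp h
  refine ht.isPreBroad.2.rel_of_tupleLE (rAbove_le ht htop)
    (tupleLE_add (tupleLE_refl ht.isPreBroad.1 ts) (hblk.mono fun _ _ _ h => rBelow_le ht h.2))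

lemma graftRel_of_tupleLE {fs ms : Multiset X} {f : X} (htop : rAbove r es ms f)
    (h : tupleLE (graftRel r es) fs ms) : graftRel r es fs f := by
  suffices ∃ ts bs cs, tupleLE (rAbove r es) (ts + bs) ms ∧
      tupleLE (fun cs g => g ∈ es ∧ rBelow r g cs g) cs bs ∧ fs = ts + cs by
    obtain ⟨ts, bs, cs, hle, hblk, rfl⟩ := this
    exact graftRel_iff.mpr
      ⟨ts, bs, cs, (GenRel.isPreBroad _).2.rel_of_tupleLE htop hle, hblk, rfl⟩
  clear htop
  induction ms using Multiset.induction generalizing fs with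
  | empty => exact ⟨0, 0, 0, by simp, by simp, by simpa using h⟩
  | cons g ms ih =>
    obtain ⟨a, b, ha, hb, rfl⟩ := tupleLE_cons_right_iff.mp h
    obtain ⟨ts₁, bs₁, cs₁, htop₁, hblk₁, rfl⟩ := graftRel_iff.mp ha
    obtain ⟨ts₂, bs₂, cs₂, htop₂, hblk₂, rfl⟩ := ih hb
    refine ⟨ts₁ + ts₂, bs₁ + bs₂, cs₁ + cs₂, ?_, tupleLE_add hblk₁ hblk₂, add_add_add_comm _ _ _ _⟩
    rw [add_add_add_comm]
    exact tupleLE_cons_right_iff.mpr ⟨_, _, htop₁, htop₂, rfl⟩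

lemma graftRel_of_rel (ht : IsTree r) {fs : Multiset X} {f : X}
    (hf : ∀ g ∈ es, ¬ descends r f g) (h : r fs f) : graftRel r es fs f := by
  refine ht.rel_induction (P := fun fs f => (∀ g ∈ es, ¬ descends r f g) → graftRel r es fs f)
    (fun f _ => ⟨{f}, 0, by rw [Multiset.map_zero, add_zero]; exact GenRel.refl f, by simp, by simp⟩)
    (fun f gs fs hup hle hf => ?_) h hf
  have hgen : aboveGen r es gs f :=
    ⟨hup, fun g hg => ⟨fun h => hf g hg h.1, fun h => hf g hg (h ▸ ht.descends_refl f)⟩⟩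
  refine graftRel_of_tupleLE (GenRel.of _ _ hgen) (hle.mono fun g hg hs ⟨hhs, ih⟩ => ?_)
  by_cases hges : g ∈ es
  · refine ⟨0, {(hs, g)}, by rw [Multiset.map_singleton, zero_add]; exact GenRel.refl g, ?_, by simp⟩
    simpa [hges] using (rBelow_iff ht (ht.descends_refl g)).mpr hhs
  · refine ih fun e he hge => ?_
    by_cases hgeq : g = e
    · exact hges (hgeq ▸ he)
    · exact ht.not_sdescends_of_mem_upTuple (hf e he) hup hg ⟨hge, hgeq⟩

lemma descends_rAbove_of_descends (ht : IsTree r) {x c : X} (hc : ∀ g ∈ es, ¬ sdescends r c g)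
    (hx : ∀ g ∈ es, ¬ sdescends r x g) (hxc : descends r x c) : descends (rAbove r es) x c := by
  by_cases hces : c ∈ es
  · obtain rfl : x = c := by_contra fun hne => hx c hces ⟨hxc, hne⟩
    exact ⟨{x}, GenRel.refl x, Multiset.mem_singleton_self x⟩
  obtain ⟨fs, hfs, hxfs⟩ := hxc
  have hc' : ∀ g ∈ es, ¬ descends r c g := fun g hg hcg =>
    hc g hg ⟨hcg, fun h => hces (h ▸ hg)⟩
  obtain ⟨ts, p, htop, hblk, rfl⟩ := graftRel_of_rel ht hc' hfs
  refine ⟨_, htop, ?_⟩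
  rcases Multiset.mem_add.mp hxfs with hxts | hxp
  · exact Multiset.mem_add.mpr (Or.inl hxts)
  obtain ⟨_, hs, hxs⟩ := Multiset.mem_join.mp hxp
  obtain ⟨q, hq, rfl⟩ := Multiset.mem_map.mp hs
  obtain rfl : x = q.2 := by_contra fun hne =>
    hx q.2 (hblk q hq).1 ⟨⟨q.1, rBelow_le ht (hblk q hq).2, hxs⟩, hne⟩
  exact Multiset.mem_add.mpr (Or.inr (Multiset.mem_map_of_mem _ hq))

theorem isTree_restrict_rAbove (ht : IsTree r) (es : Multiset X) :
    IsTree ((rAbove r es).restrict fun f => ∀ g ∈ es, ¬ sdescends r f g) := by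
  obtain ⟨rt, hrt⟩ := ht.exists_root
  have hrtU : ∀ g ∈ es, ¬ sdescends r rt g := fun g _ h =>
    h.2 (ht.descends_antisymm h.1 (hrt g))
  refine ht.restrict (GenRel.isPreBroad _) (fun _ _ => rAbove_le ht)
    (fun fs f h hf => not_sdescends_of_mem_rAbove ht h hf) (fun f hf => ?_)
    ⟨rt, hrtU, fun f hf => descends_rAbove_of_descends ht hrtU hf (hrt f)⟩
  by_cases hfes : f ∈ es
  · refine Or.inl fun ⟨fs, hfs, hne⟩ => ?_
    rcases GenRel.eq_singleton_or_exists_tupleLE hfs with h | ⟨gs, hgen, -⟩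
    exacts [hne h, (hgen.2 f hfes).2 rfl]
  rcases ht.isLeaf_or_exists_upTuple f with hleaf | ⟨gs, hup⟩
  · exact Or.inl (hleaf.mono fun _ => rAbove_le ht)
  have hgen : aboveGen r es gs f := ⟨hup, fun g hg => ⟨hf g hg, fun h => hfes (h ▸ hg)⟩⟩
  refine Or.inr ⟨gs, ⟨GenRel.of _ _ hgen, hup.1.2⟩, fun hs hhs hne => ?_⟩
  rcases GenRel.eq_singleton_or_exists_tupleLE hhs with h | ⟨gs', hgen', hle⟩
  · exact absurd h hne
  · rwa [ht.upTuple_unique hup hgen'.1]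

end Above

theorem stmt6_general {X : Type u} (r : Rel X) (ht : IsTree r) (e : X)
    (es : Multiset X) :
    IsTree (fun (fs : Multiset {f : X // descends r f e})
        (f : {f : X // descends r f e}) =>
      rBelow r e (fs.map Subtype.val) f.val) ∧
    IsTree (fun (fs : Multiset {f : X // ∀ g ∈ es, ¬ sdescends r f g})
        (f : {f : X // ∀ g ∈ es, ¬ sdescends r f g}) =>
      rAbove r es (fs.map Subtype.val) f.val) ∧
    (∀ fs f, r fs f ↔
      (rAbove r es fs f ∨ (∃ g ∈ es, rBelow r g fs f) ∨
        ∃ (ts : Multiset X) (p : Multiset (Multiset X × X)),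
          rAbove r es (ts + p.map Prod.snd) f ∧
          (∀ q ∈ p, q.2 ∈ es ∧ rBelow r q.2 q.1 q.2) ∧
          fs = ts + (p.map Prod.fst).sum)) := by
  refine ⟨isTree_restrict_rBelow ht e, isTree_restrict_rAbove ht es, fun fs f => ⟨fun h => ?_, ?_⟩⟩
  · by_cases hf : ∃ g ∈ es, descends r f g
    · obtain ⟨g, hg, hfg⟩ := hf
      exact Or.inr (Or.inl ⟨g, hg, (rBelow_iff ht hfg).mpr h⟩)
    · simp only [not_exists, not_and] at hf
      exact Or.inr (Or.inr (graftRel_of_rel ht hf h))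
  · rintro (h | ⟨g, -, h⟩ | h)
    · exact rAbove_le ht h
    · exact rBelow_le ht h
    · exact rel_of_graftRel ht h

/-- `T^{≤e}` and `T_{≮e̲}` are trees, and `T` is (identically
on underlying sets) the grafting `T_{≮e̲} ⨿_{e̲} (T^{≤e₁} ⨿ ⋯ ⨿ T^{≤eₙ})`,
whose relations are relations of `T_{≮e̲}`, relations of some `T^{≤eᵢ}`, and
composites thereof. -/
theorem stmt6 {X : Type u} (r : Rel X) (ht : IsTree r) (e : X)
    (es : Multiset X) (hinc : es.Pairwise (Incomp r)) :
    IsTree (fun (fs : Multiset {f : X // descends r f e})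
        (f : {f : X // descends r f e}) =>
      rBelow r e (fs.map Subtype.val) f.val) ∧
    IsTree (fun (fs : Multiset {f : X // ∀ g ∈ es, ¬ sdescends r f g})
        (f : {f : X // ∀ g ∈ es, ¬ sdescends r f g}) =>
      rAbove r es (fs.map Subtype.val) f.val) ∧
    (∀ fs f, r fs f ↔
      (rAbove r es fs f ∨ (∃ g ∈ es, rBelow r g fs f) ∨
        ∃ (ts : Multiset X) (p : Multiset (Multiset X × X)),
          rAbove r es (ts + p.map Prod.snd) f ∧
          (∀ q ∈ p, q.2 ∈ es ∧ rBelow r q.2 q.1 q.2) ∧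
          fs = ts + (p.map Prod.fst).sum)) :=
  stmt6_general r ht e es

end BroadPaper
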